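/- arXiv:2309.14618 — 2 statements merged into one kernel-verified Lean document; each statement's English description precedes it below -/
import Mathlib

section
/- Let n ≥ 1 and R be natural numbers, and let ℓ, ℓ′ : ℕ → ℕ be sequences satisfying ℓ_r ≤ n and ℓ′_r ≤ n for all r, and ℓ_r = ℓ′_r = 0 for all r > R, such that ℓ strictly precedes ℓ′ in lexicographic order (there is r* with ℓ_{r*} < ℓ′_{r*} and ℓ_r = ℓ′_r for all 1 ≤ r < r*). Set w = ∑_{r=1}^{R} ℓ_r (2n)^{−r} and w′ = ∑_{r=1}^{R} ℓ′_r (2n)^{−r}. Suppose f, g : ℕ → ℝ are strictly positive functions and C ≥ 0 is a constant such that for all m ≥ 2, |log f(m) + w·log m| ≤ C and |log g(m) + w′·log m| ≤ C. Then g(m)/f(m) → 0 as m → ∞. -/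
/-!
Put `x = (2n)⁻¹`. Since `(n + 1) x ≤ 1`, the weights `x ^ r` decrease so fast that the gain
`x ^ r*` at the first index where `ℓ` and `ℓ'` differ beats the largest possible loss
`n ∑_{r > r*} x ^ r` at all later indices; hence `w < w'`. The bounds on the logarithms then
give `g m / f m ≤ exp (2C) · m ^ (w - w')`, which tends to `0`.
-/

open Filter Topology Finset Real

theorem mul_sum_Ico_pow_le_pow_sub_pow {c x : ℝ} (hx : 0 ≤ x) (hcx : (c + 1) * x ≤ 1)
    {s R : ℕ} (hsR : s ≤ R) :
    c * ∑ r ∈ Ico (s + 1) (R + 1), x ^ r ≤ x ^ s - x ^ R := by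
  induction R, hsR using Nat.le_induction with
  | base => simp
  | succ R _ ih =>
    rw [sum_Ico_succ_top (by omega), mul_add, pow_succ]
    have hstep : c * (x ^ R * x) ≤ x ^ R - x ^ R * x := by
      nlinarith [pow_nonneg hx R]
    linarith

theorem sum_mul_pow_lt_of_lex_lt {n : ℕ} {x : ℝ} (hx : 0 < x) (hnx : (n + 1) * x ≤ 1)
    {a b : ℕ → ℕ} (ha : ∀ r, a r ≤ n) {s R : ℕ} (hs : 1 ≤ s) (hsR : s ≤ R)
    (hlt : a s < b s) (heq : ∀ r, 1 ≤ r → r < s → a r = b r) :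
    ∑ r ∈ Icc 1 R, (a r : ℝ) * x ^ r < ∑ r ∈ Icc 1 R, (b r : ℝ) * x ^ r := by
  rw [← sub_pos, ← sum_sub_distrib, ← Ico_add_one_right_eq_Icc,
    ← sum_Ico_consecutive _ hs (by omega : s ≤ R + 1),
    sum_eq_sum_Ico_succ_bot (by omega : s < R + 1)]
  have hprefix : ∑ r ∈ Ico 1 s, ((b r : ℝ) * x ^ r - a r * x ^ r) = 0 :=
    sum_eq_zero fun r hr => by
      rw [mem_Ico] at hr
      rw [heq r hr.1 hr.2, sub_self]
  have hhead : x ^ s ≤ (b s : ℝ) * x ^ s - a s * x ^ s := by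
    have hgap : (a s : ℝ) + 1 ≤ b s := by exact_mod_cast hlt
    nlinarith [pow_pos hx s]
  have htail : -((n : ℝ) * ∑ r ∈ Ico (s + 1) (R + 1), x ^ r) ≤
      ∑ r ∈ Ico (s + 1) (R + 1), ((b r : ℝ) * x ^ r - a r * x ^ r) := by
    rw [mul_sum, ← sum_neg_distrib]
    refine sum_le_sum fun r _ => ?_
    have har : (a r : ℝ) ≤ n := by exact_mod_cast ha r
    nlinarith [pow_pos hx r, (b r).cast_nonneg (α := ℝ)]
  have hgeom := mul_sum_Ico_pow_le_pow_sub_pow hx.le hnx hsR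
  linarith [pow_pos hx R]

theorem tendsto_div_nhds_zero_of_abs_log_add_mul_log_le {f g : ℕ → ℝ} {w w' C : ℝ}
    (hw : w < w') (hf : ∀ᶠ m in atTop, 0 < f m) (hg : ∀ᶠ m in atTop, 0 < g m)
    (hfb : ∀ᶠ m in atTop, |log (f m) + w * log m| ≤ C)
    (hgb : ∀ᶠ m in atTop, |log (g m) + w' * log m| ≤ C) :
    Tendsto (fun m => g m / f m) atTop (𝓝 0) := by
  have hbound : Tendsto (fun m : ℕ => 2 * C + -((w' - w) * log m)) atTop atBot :=
    tendsto_atBot_add_const_left _ _ <| tendsto_neg_atTop_atBot.comp <|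
      (tendsto_log_atTop.comp tendsto_natCast_atTop_atTop).const_mul_atTop (sub_pos.2 hw)
  have hdiff : Tendsto (fun m => log (g m) - log (f m)) atTop atBot := by
    refine tendsto_atBot_mono' _ ?_ hbound
    filter_upwards [hfb, hgb] with m hfm hgm
    rw [abs_le] at hfm hgm
    linarith [hfm.1, hgm.2]
  refine (tendsto_exp_atBot.comp hdiff).congr' ?_
  filter_upwards [hf, hg] with m hfm hgm
  simp only [Function.comp_apply, exp_sub, exp_log hfm, exp_log hgm]

theorem ratio_tendsto_zero_of_lex_lt_general
    (n R : ℕ) (hn : 1 ≤ n) (ℓ ℓ' : ℕ → ℕ)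
    (hℓ : ∀ r, ℓ r ≤ n)
    (hlex : ∃ rs, 1 ≤ rs ∧ rs ≤ R ∧ ℓ rs < ℓ' rs ∧
      ∀ r, 1 ≤ r → r < rs → ℓ r = ℓ' r)
    (f g : ℕ → ℝ) (hf : ∀ m, 0 < f m) (hg : ∀ m, 0 < g m)
    (C : ℝ)
    (hfb : ∀ m : ℕ, 2 ≤ m →
      |Real.log (f m) +
        (∑ r ∈ Finset.Icc 1 R, (ℓ r : ℝ) * (2 * n : ℝ) ^ (-(r : ℤ))) * Real.log m| ≤ C)
    (hgb : ∀ m : ℕ, 2 ≤ m →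
      |Real.log (g m) +
        (∑ r ∈ Finset.Icc 1 R, (ℓ' r : ℝ) * (2 * n : ℝ) ^ (-(r : ℤ))) * Real.log m| ≤ C) :
    Filter.Tendsto (fun m => g m / f m) Filter.atTop (nhds 0) := by
  obtain ⟨rs, hrs1, hrsR, hlt, heq⟩ := hlex
  have hn' : (1 : ℝ) ≤ n := by exact_mod_cast hn
  have hzpow (r : ℕ) : (2 * n : ℝ) ^ (-(r : ℤ)) = (2 * n : ℝ)⁻¹ ^ r := by
    rw [zpow_neg, zpow_natCast, inv_pow]
  have hnx : ((n : ℝ) + 1) * (2 * n : ℝ)⁻¹ ≤ 1 := by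
    rw [← div_eq_mul_inv, div_le_one (by positivity)]
    linarith
  simp only [hzpow] at hfb hgb
  exact tendsto_div_nhds_zero_of_abs_log_add_mul_log_le
    (sum_mul_pow_lt_of_lex_lt (by positivity) hnx hℓ hrs1 hrsR hlt heq)
    (.of_forall hf) (.of_forall hg) (eventually_atTop.2 ⟨2, hfb⟩) (eventually_atTop.2 ⟨2, hgb⟩)

/-- Lemma 5.6 of the paper in abstracted form: if the lie sequence `ℓ` of `h`
strictly precedes the lie sequence `ℓ'` of `h'` in lexicographic order, and the
(positive) probabilities `f m = P^m(h)`, `g m = P^m(h')` satisfy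
`log (f m) = -w log m + Θ(1)` and `log (g m) = -w' log m + Θ(1)` where
`w = ∑ ℓ_r (2n)^{-r}` and `w' = ∑ ℓ'_r (2n)^{-r}`, then `g m / f m → 0`. -/
theorem ratio_tendsto_zero_of_lex_lt
    (n R : ℕ) (hn : 1 ≤ n) (ℓ ℓ' : ℕ → ℕ)
    (hℓ : ∀ r, ℓ r ≤ n) (hℓ' : ∀ r, ℓ' r ≤ n)
    (hℓR : ∀ r, R < r → ℓ r = 0) (hℓ'R : ∀ r, R < r → ℓ' r = 0)
    (hlex : ∃ rs, 1 ≤ rs ∧ rs ≤ R ∧ ℓ rs < ℓ' rs ∧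
      ∀ r, 1 ≤ r → r < rs → ℓ r = ℓ' r)
    (f g : ℕ → ℝ) (hf : ∀ m, 0 < f m) (hg : ∀ m, 0 < g m)
    (C : ℝ) (hC : 0 ≤ C)
    (hfb : ∀ m : ℕ, 2 ≤ m →
      |Real.log (f m) +
        (∑ r ∈ Finset.Icc 1 R, (ℓ r : ℝ) * (2 * n : ℝ) ^ (-(r : ℤ))) * Real.log m| ≤ C)
    (hgb : ∀ m : ℕ, 2 ≤ m →
      |Real.log (g m) +
        (∑ r ∈ Finset.Icc 1 R, (ℓ' r : ℝ) * (2 * n : ℝ) ^ (-(r : ℤ))) * Real.log m| ≤ C) :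
    Filter.Tendsto (fun m => g m / f m) Filter.atTop (nhds 0) :=
  ratio_tendsto_zero_of_lex_lt_general n R hn ℓ ℓ' hℓ hlex f g hf hg C hfb hgb
end

section
/- Let F be a finite field, let k be a natural number, and let x_1, …, x_k ∈ F be k pairwise distinct nonzero elements. For each y ∈ F, let P_y denote the uniform probability distribution on the (finite, nonempty) set of polynomials p ∈ F[X] with degree at most k and p(0) = y. Then for every y ∈ F, the pushforward of P_y under the evaluation map p ↦ (p(x_1), …, p(x_k)) is the uniform distribution on F^k; in particular, this pushforward distribution is the same for all secrets y ∈ F. -/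
/-!
Adjoining the node `0` to `x₁, …, x_k` gives `k + 1` distinct nodes, so by Lagrange interpolation
evaluation at them is a bijection from the polynomials of degree `≤ k` onto `F^(k+1)`. Fixing the
value `y` at `0`, the shares `p ↦ (p(x₁), …, p(x_k))` are therefore a bijection from the
polynomials with secret `y` onto `F^k`, and the pushforward of a uniform distribution along a
bijection is uniform.
-/

open Polynomial Function

theorem PMF.map_uniformOfFinset_of_bijOn {α β : Type*} [Fintype β] [Nonempty β]
    {s : Finset α} (hs : s.Nonempty) {f : α → β} (hf : Set.BijOn f s Set.univ) :
    (uniformOfFinset s hs).map f = uniformOfFintype β := by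
  have hcard : s.card = Fintype.card β :=
    Finset.card_nbij f (by simp) hf.injOn (by simpa using hf.surjOn)
  ext b
  obtain ⟨a, ha, rfl⟩ := hf.surjOn (Set.mem_univ b)
  rw [map_apply, tsum_eq_single a, if_pos rfl, uniformOfFinset_apply_of_mem hs (Finset.mem_coe.1 ha),
    uniformOfFintype_apply, hcard]
  intro a' ha'
  split_ifs with hfa
  · exact uniformOfFinset_apply_of_notMem _ fun ha's => ha' (hf.injOn ha's ha hfa.symm)
  · rfl

section Interpolation

variable {F ι : Type*} [Field F] [Fintype ι]

theorem Lagrange.bijOn_eval_degree_lt {v : ι → F} (hv : Injective v) :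
    Set.BijOn (fun p : F[X] => fun i => p.eval (v i))
      {p | p.degree < Fintype.card ι} Set.univ := by
  classical
  have hvs : Set.InjOn v (Finset.univ : Finset ι) := hv.injOn
  refine ⟨fun _ _ => Set.mem_univ _, fun p hp q hq hpq => ?_, fun r _ => ?_⟩
  · exact eq_of_degrees_lt_of_eval_index_eq _ hvs (by simpa using hp) (by simpa using hq)
      fun i _ => congrFun hpq i
  · exact ⟨interpolate Finset.univ v r, by simpa using degree_interpolate_lt r hvs,
      funext fun i => eval_interpolate_at_node r hvs (Finset.mem_univ i)⟩

theorem Lagrange.bijOn_eval_of_degree_le_of_eval_zero {x : ι → F} (hinj : Injective x)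
    (hx : ∀ i, x i ≠ 0) (y : F) :
    Set.BijOn (fun p : F[X] => fun i => p.eval (x i))
      {p | p.degree ≤ Fintype.card ι ∧ p.eval 0 = y} Set.univ := by
  set v : Option ι → F := fun o => o.elim 0 x
  have hv : Injective v := by
    rintro (_ | i) (_ | j) hij
    · rfl
    · exact absurd hij.symm (hx j)
    · exact absurd hij (hx i)
    · exact congrArg some (hinj hij)
  have hbij := bijOn_eval_degree_lt hv
  have hdeg (p : F[X]) : p.degree < Fintype.card (Option ι) ↔ p.degree ≤ Fintype.card ι := by
    rw [Fintype.card_option, ← mem_degreeLE, ← degreeLT_succ_eq_degreeLE, mem_degreeLT]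
  refine ⟨fun _ _ => Set.mem_univ _, fun p hp q hq hpq => ?_, fun a _ => ?_⟩
  · refine hbij.injOn ((hdeg p).2 hp.1) ((hdeg q).2 hq.1) (funext ?_)
    rintro (_ | i)
    · exact hp.2.trans hq.2.symm
    · exact congrFun hpq i
  · obtain ⟨p, hp, hpa⟩ := hbij.surjOn (Set.mem_univ fun o => o.elim y a)
    exact ⟨p, ⟨(hdeg p).1 hp, congrFun hpa none⟩, funext fun i => congrFun hpa (some i)⟩

end Interpolation

theorem shamir_shares_uniform_general
    (F : Type*) [Field F] [Fintype F] (k : ℕ) (x : Fin k → F)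
    (hinj : Function.Injective x) (hx : ∀ i, x i ≠ 0)
    (s : F → Finset (Polynomial F))
    (hs : ∀ y p, p ∈ s y ↔ p.degree ≤ (k : WithBot ℕ) ∧ p.eval 0 = y)
    (hne : ∀ y, (s y).Nonempty) :
    ∀ y : F,
      (PMF.uniformOfFinset (s y) (hne y)).map
          (fun p => (fun i => p.eval (x i) : Fin k → F)) =
        PMF.uniformOfFintype (Fin k → F) := by
  intro y
  have hsy : (s y : Set F[X]) =
      {p : F[X] | p.degree ≤ (Fintype.card (Fin k) : WithBot ℕ) ∧ p.eval 0 = y} := by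
    ext p
    simp [hs]
  refine PMF.map_uniformOfFinset_of_bijOn _ ?_
  rw [hsy]
  exact Lagrange.bijOn_eval_of_degree_le_of_eval_zero hinj hx y

/-- Distributional secrecy of Shamir secret sharing: for any secret `y`, if a
polynomial of degree at most `k` with constant term `y` is chosen uniformly at
random, then its vector of evaluations at `k` pairwise distinct nonzero points
is uniformly distributed on `F^k`; in particular, this distribution is the same
for every secret `y`. -/
theorem shamir_shares_uniform
    (F : Type*) [Field F] [Fintype F] [DecidableEq F] (k : ℕ) (x : Fin k → F)
    (hinj : Function.Injective x) (hx : ∀ i, x i ≠ 0)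
    (s : F → Finset (Polynomial F))
    (hs : ∀ y p, p ∈ s y ↔ p.degree ≤ (k : WithBot ℕ) ∧ p.eval 0 = y)
    (hne : ∀ y, (s y).Nonempty) :
    ∀ y : F,
      (PMF.uniformOfFinset (s y) (hne y)).map
          (fun p => (fun i => p.eval (x i) : Fin k → F)) =
        PMF.uniformOfFintype (Fin k → F) :=
  shamir_shares_uniform_general F k x hinj hx s hs hne
end
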